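/- Let p be an odd prime, K a field containing a primitive p-th root of unity ζ, and t ∈ K. Let B = K[x, y]/(y² − x(x^{2p} + t·x^p + 1)) and let A be the localization of B at the multiplicative set generated by the images of x and y. Let ζ̂ be the K-algebra automorphism of A determined by ζ̂(x) = ζ·x and ζ̂(y) = ζ^{(p+1)/2}·y. For each integer j with 0 ≤ j ≤ (p−3)/2, set ω_j := (x^j − x^{p−1−j})·y⁻¹·dx, an element of the module of Kähler differentials Ω_{A/K}. Then for every such j one has (ζ̂* + (ζ̂⁻¹)*)(ω_j) = (ζ^{(p+1)/2−j−1} + ζ^{−((p+1)/2−j−1)})·ω_j in Ω_{A/K}. -/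

import Mathlib

/-!
Statement 4 (Tautz–Top–Verberkmoes, eigenvalue computation for `ζ̂* + (ζ̂⁻¹)*` on the
differentials `ω_j` of the curve `D_t : y² = x(x^{2p} + t·x^p + 1)`).
-/

set_option synthInstance.maxHeartbeats 1000000
set_option maxHeartbeats 2000000

noncomputable section

open MvPolynomial

/-- The defining polynomial `y² − x·(x^{2p} + t·x^p + 1)` in `K[x,y]`,
where `x = X 0` and `y = X 1`. -/
def hyperRel (p : ℕ) (K : Type*) [Field K] (t : K) : MvPolynomial (Fin 2) K :=
  (X 1) ^ 2 - X 0 * ((X 0) ^ (2 * p) + C t * (X 0) ^ p + 1)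

/-- `B = K[x,y]/(y² − x(x^{2p} + t·x^p + 1))`. -/
abbrev CurveRing (p : ℕ) (K : Type*) [Field K] (t : K) :=
  MvPolynomial (Fin 2) K ⧸ Ideal.span {hyperRel p K t}

/-- The image of `x` in `B`. -/
def xB (p : ℕ) (K : Type*) [Field K] (t : K) : CurveRing p K t :=
  Ideal.Quotient.mk (Ideal.span {hyperRel p K t}) (X 0)

/-- The image of `y` in `B`. -/
def yB (p : ℕ) (K : Type*) [Field K] (t : K) : CurveRing p K t :=
  Ideal.Quotient.mk (Ideal.span {hyperRel p K t}) (X 1)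

/-- `A`, the localization of `B` at the multiplicative set generated by `x` and `y`. -/
abbrev CurveLoc (p : ℕ) (K : Type*) [Field K] (t : K) :=
  Localization (Submonoid.closure {xB p K t, yB p K t})

/-- The image of `x` in `A`. -/
def xA (p : ℕ) (K : Type*) [Field K] (t : K) : CurveLoc p K t :=
  algebraMap (CurveRing p K t) (CurveLoc p K t) (xB p K t)

/-- The image of `y` in `A`. -/
def yA (p : ℕ) (K : Type*) [Field K] (t : K) : CurveLoc p K t :=
  algebraMap (CurveRing p K t) (CurveLoc p K t) (yB p K t)

/-- The differential `ω_j = (x^j − x^{p−1−j})·y⁻¹·dx` in `Ω_{A/K}`.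
(`y` is a unit in `A`, and `Ring.inverse` produces its inverse.) -/
def omegaJ (p : ℕ) (K : Type*) [Field K] (t : K) (j : ℕ) :
    Ω[CurveLoc p K t⁄K] :=
  (((xA p K t) ^ j - (xA p K t) ^ (p - 1 - j)) * Ring.inverse (yA p K t)) •
    (KaehlerDifferential.D K (CurveLoc p K t)) (xA p K t)

/-!
The automorphism `ζ̂` scales `x` by `ζ` and `y` by `ζ^m`, `m = (p+1)/2`, so each form
`x^n y⁻¹ dx` is an eigenvector of `ζ̂*` with eigenvalue `ζ^(n+1-m)` and of `(ζ̂⁻¹)*` with the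
inverse eigenvalue. `ω_j` is the difference of two such forms, `n = j` and `n = p-1-j`, whose
exponents `n+1-m` are `-N` and `N` for `N = (p+1)/2 - j - 1`; hence both are eigenvectors of
`ζ̂* + (ζ̂⁻¹)*` for the same eigenvalue `ζ^N + ζ^(-N)`.
-/

namespace KaehlerDifferential

variable {R A B : Type*} [CommRing R] [CommRing A] [CommRing B] [Algebra R A] [Algebra R B]

/-- `B` is an `A`-algebra through `φ` only locally: for `B = A` that instance would clash with
`Algebra.id`. -/
def pullback (φ : A →ₐ[R] B) : Ω[A⁄R] →+ Ω[B⁄R] :=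
  let := φ.toAlgebra
  haveI : IsScalarTower R A B := .of_algebraMap_eq' φ.comp_algebraMap.symm
  (map R R A B).toAddMonoidHom

theorem pullback_smul_D (φ : A →ₐ[R] B) (r s : A) :
    pullback φ (r • D R A s) = φ r • D R B (φ s) := by
  let := φ.toAlgebra
  have : IsScalarTower R A B := .of_algebraMap_eq' φ.comp_algebraMap.symm
  exact ((map R R A B).map_smul r (D R A s)).trans (by rw [map_D]; rfl)

end KaehlerDifferential

section Eigenvectors

open KaehlerDifferential

variable {K A F : Type*} [Field K] [CommRing A] [Algebra K A] [FunLike F A A]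
  [AlgHomClass F K A A]

theorem AlgEquiv.symm_apply_eq_algebraMap_inv_mul (σ : A ≃ₐ[K] A) {μ : K} (hμ : μ ≠ 0)
    {x : A} (h : σ x = algebraMap K A μ * x) : σ.symm x = algebraMap K A μ⁻¹ * x := by
  apply σ.injective
  rw [σ.apply_symm_apply, map_mul, AlgEquiv.commutes, h, ← mul_assoc, ← map_mul,
    inv_mul_cancel₀ hμ, map_one, one_mul]

theorem map_ringInverse_eq_algebraMap_inv_mul (φ : F) {μ : K} (hμ : μ ≠ 0) {y : A}
    (hy : IsUnit y) (h : φ y = algebraMap K A μ * y) :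
    φ (Ring.inverse y) = algebraMap K A μ⁻¹ * Ring.inverse y := by
  refine left_inv_eq_right_inv (a := φ y) ?_ ?_
  · rw [← map_mul, Ring.inverse_mul_cancel _ hy, map_one]
  · rw [h, mul_mul_mul_comm, ← map_mul, mul_inv_cancel₀ hμ, map_one, one_mul,
      Ring.mul_inverse_cancel _ hy]

theorem map_pow_mul_ringInverse (φ : F) {x y : A} {μ ν : K} (hν : ν ≠ 0) (hy : IsUnit y)
    (hφx : φ x = algebraMap K A μ * x) (hφy : φ y = algebraMap K A ν * y) (n : ℕ) :
    φ (x ^ n * Ring.inverse y) = algebraMap K A (μ ^ n * ν⁻¹) * (x ^ n * Ring.inverse y) := by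
  rw [map_mul, map_pow, hφx, map_ringInverse_eq_algebraMap_inv_mul φ hν hy hφy, map_mul,
    map_pow]
  ring

theorem apply_smul_D_eq_algebraMap_mul_smul {T : Ω[A⁄K] →+ Ω[A⁄K]} (φ : A → A)
    (hT : ∀ r s : A, T (r • D K A s) = φ r • D K A (φ s)) {f x : A} {μ ν : K}
    (hf : φ f = algebraMap K A μ * f) (hx : φ x = algebraMap K A ν * x) :
    T (f • D K A x) = algebraMap K A (μ * ν) • f • D K A x := by
  rw [hT, hf, hx, Derivation.leibniz, Derivation.map_algebraMap, smul_zero, add_zero,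
    smul_smul, smul_smul, map_mul, mul_right_comm]

end Eigenvectors

theorem isUnit_yA (p : ℕ) (K : Type*) [Field K] (t : K) : IsUnit (yA p K t) :=
  IsLocalization.map_units (CurveLoc p K t)
    (⟨yB p K t, Submonoid.subset_closure (Set.mem_insert_of_mem _ rfl)⟩ :
      Submonoid.closure {xB p K t, yB p K t})

theorem tautz_top_verberkmoes_eigenvalue_general
    (p : ℕ) (hodd : Odd p)
    (K : Type*) [Field K] (ζ : K) (hζ : IsPrimitiveRoot ζ p) (t : K)
    (zhat : CurveLoc p K t ≃ₐ[K] CurveLoc p K t)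
    (hzx : zhat (xA p K t) = algebraMap K (CurveLoc p K t) ζ * xA p K t)
    (hzy : zhat (yA p K t) =
      algebraMap K (CurveLoc p K t) ζ ^ ((p + 1) / 2) * yA p K t)
    (j : ℕ) (hj : j ≤ (p - 3) / 2) :
    -- the pullback map `ζ̂*` exists (and likewise for `ζ̂⁻¹` in place of `ζ̂`) …
    (∃ T : Ω[CurveLoc p K t⁄K] →+ Ω[CurveLoc p K t⁄K],
        ∀ r s : CurveLoc p K t,
          T (r • (KaehlerDifferential.D K (CurveLoc p K t)) s) =
            zhat r • (KaehlerDifferential.D K (CurveLoc p K t)) (zhat s)) ∧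
    -- … and for any maps `T = ζ̂*` and `T' = (ζ̂⁻¹)*` so characterized, the asserted
    -- eigenvalue identity holds:
    (∀ T T' : Ω[CurveLoc p K t⁄K] →+ Ω[CurveLoc p K t⁄K],
        (∀ r s : CurveLoc p K t,
          T (r • (KaehlerDifferential.D K (CurveLoc p K t)) s) =
            zhat r • (KaehlerDifferential.D K (CurveLoc p K t)) (zhat s)) →
        (∀ r s : CurveLoc p K t,
          T' (r • (KaehlerDifferential.D K (CurveLoc p K t)) s) =
            zhat.symm r • (KaehlerDifferential.D K (CurveLoc p K t)) (zhat.symm s)) →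
        T (omegaJ p K t j) + T' (omegaJ p K t j) =
          algebraMap K (CurveLoc p K t)
              (ζ ^ ((p + 1) / 2 - j - 1) + ζ⁻¹ ^ ((p + 1) / 2 - j - 1)) •
            omegaJ p K t j) := by
  refine ⟨⟨KaehlerDifferential.pullback zhat.toAlgHom,
    KaehlerDifferential.pullback_smul_D zhat.toAlgHom⟩, fun T T' hT hT' => ?_⟩
  obtain ⟨N, hm, hq, hN⟩ : ∃ N, (p + 1) / 2 = j + N + 1 ∧ p - 1 - j = j + 2 * N ∧
      (p + 1) / 2 - j - 1 = N := by
    obtain ⟨k, hk⟩ := hodd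
    exact ⟨(p + 1) / 2 - j - 1, by omega, by omega, rfl⟩
  set x := xA p K t
  set y := yA p K t
  obtain ⟨u, hu⟩ : ∃ u : ℕ → Ω[CurveLoc p K t⁄K],
      ∀ n, u n = (x ^ n * Ring.inverse y) • KaehlerDifferential.D K _ x := ⟨_, fun _ => rfl⟩
  have hω : omegaJ p K t j = u j - u (j + 2 * N) := by
    rw [hu, hu, ← hq, ← sub_smul, ← sub_mul]
    rfl
  have hζ0 : ζ ≠ 0 := hζ.ne_zero hodd.pos.ne'
  have hy : IsUnit y := isUnit_yA p K t
  rw [hm, ← map_pow] at hzy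
  have hsx := zhat.symm_apply_eq_algebraMap_inv_mul hζ0 hzx
  have hsy := zhat.symm_apply_eq_algebraMap_inv_mul (pow_ne_zero _ hζ0) hzy
  have hTu (n : ℕ) := hu n ▸ apply_smul_D_eq_algebraMap_mul_smul zhat hT
    (map_pow_mul_ringInverse zhat (pow_ne_zero _ hζ0) hy hzx hzy n) hzx
  have hT'u (n : ℕ) := hu n ▸ apply_smul_D_eq_algebraMap_mul_smul zhat.symm hT'
    (map_pow_mul_ringInverse zhat.symm (inv_ne_zero (pow_ne_zero _ hζ0)) hy hsx hsy n) hsx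
  have hcoeff (n : ℕ) (hn : n = j ∨ n = j + 2 * N) :
      ζ ^ n * (ζ ^ (j + N + 1))⁻¹ * ζ + ζ⁻¹ ^ n * (ζ ^ (j + N + 1))⁻¹⁻¹ * ζ⁻¹ =
        ζ ^ N + ζ⁻¹ ^ N := by
    rcases hn with rfl | rfl <;> simp only [inv_pow, inv_inv] <;> field_simp <;> ring
  rw [hω, map_sub, map_sub, hTu, hTu, hT'u, hT'u, hN, smul_sub]
  nth_rw 1 [← hcoeff j (.inl rfl)]
  rw [← hcoeff _ (.inr rfl), map_add, map_add, add_smul, add_smul]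
  abel

/-- Let `p` be an odd prime, `ζ ∈ K` a primitive `p`-th root of unity, `t ∈ K`,
and let `ζ̂` be the `K`-algebra automorphism of `A` with `ζ̂(x) = ζ·x`,
`ζ̂(y) = ζ^((p+1)/2)·y`.  For `0 ≤ j ≤ (p−3)/2`, the pullback maps `ζ̂*` and `(ζ̂⁻¹)*` on
Kähler differentials (the additive maps characterized by `φ*(r·ds) = φ(r)·d(φ(s))`, which
exist) satisfy
`(ζ̂* + (ζ̂⁻¹)*)(ω_j) = (ζ^((p+1)/2−j−1) + ζ^(−((p+1)/2−j−1)))·ω_j`. -/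
theorem tautz_top_verberkmoes_eigenvalue
    (p : ℕ) (hp : p.Prime) (hodd : Odd p)
    (K : Type*) [Field K] (ζ : K) (hζ : IsPrimitiveRoot ζ p) (t : K)
    (zhat : CurveLoc p K t ≃ₐ[K] CurveLoc p K t)
    (hzx : zhat (xA p K t) = algebraMap K (CurveLoc p K t) ζ * xA p K t)
    (hzy : zhat (yA p K t) =
      algebraMap K (CurveLoc p K t) ζ ^ ((p + 1) / 2) * yA p K t)
    (j : ℕ) (hj : j ≤ (p - 3) / 2) :
    -- the pullback map `ζ̂*` exists (and likewise for `ζ̂⁻¹` in place of `ζ̂`) …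
    (∃ T : Ω[CurveLoc p K t⁄K] →+ Ω[CurveLoc p K t⁄K],
        ∀ r s : CurveLoc p K t,
          T (r • (KaehlerDifferential.D K (CurveLoc p K t)) s) =
            zhat r • (KaehlerDifferential.D K (CurveLoc p K t)) (zhat s)) ∧
    -- … and for any maps `T = ζ̂*` and `T' = (ζ̂⁻¹)*` so characterized, the asserted
    -- eigenvalue identity holds:
    (∀ T T' : Ω[CurveLoc p K t⁄K] →+ Ω[CurveLoc p K t⁄K],
        (∀ r s : CurveLoc p K t,
          T (r • (KaehlerDifferential.D K (CurveLoc p K t)) s) =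
            zhat r • (KaehlerDifferential.D K (CurveLoc p K t)) (zhat s)) →
        (∀ r s : CurveLoc p K t,
          T' (r • (KaehlerDifferential.D K (CurveLoc p K t)) s) =
            zhat.symm r • (KaehlerDifferential.D K (CurveLoc p K t)) (zhat.symm s)) →
        T (omegaJ p K t j) + T' (omegaJ p K t j) =
          algebraMap K (CurveLoc p K t)
              (ζ ^ ((p + 1) / 2 - j - 1) + ζ⁻¹ ^ ((p + 1) / 2 - j - 1)) •
            omegaJ p K t j) :=
  tautz_top_verberkmoes_eigenvalue_general p hodd K ζ hζ t zhat hzx hzy j hj
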